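/- Let a₁,…,a₉ ∈ ℂ be such that a₁,a₂,a₃ are pairwise distinct, a₄,a₅,a₉ are pairwise distinct, and a₆,a₇,a₈ are pairwise distinct, and consider the nine points of ℙ²(ℂ): p₁=(1:−a₁:1), p₂=(1:−a₂:1), p₃=(1:−a₃:1), p₄=(0:a₄:1), p₅=(0:a₅:1), p₉=(0:a₉:1), p₆=(1:a₆:0), p₇=(1:a₇:0), p₈=(1:a₈:0). Then every nonzero homogeneous polynomial f ∈ ℂ[x₀,x₁,x₂] of degree 3 vanishing at all nine points is a scalar multiple of x₀(x₀−x₂)x₂ if and only if a₁+a₂+⋯+a₉ ≠ 0. -/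

import Mathlib

/-!
Parametrize the lines x₂ = 0, x₀ = 0, x₀ = x₂ by (1, t, 0), (0, t, 1), (1, t, 1); they all pass
through (0:1:0). On each line a cubic f restricts to a cubic in t with leading coefficient
f(0,1,0), and its t²-coefficient is a fixed linear form evaluated at (1,0), (0,1), (1,1), so on the
third line it is the sum of those on the first two. Vieta's formulas for the three prescribed zeros
on each line then give f(0,1,0) · (a₁ + ⋯ + a₉) = 0. If the sum is nonzero, f(0,1,0) = 0, so f has
four zeros on each line, vanishes on all three, and is a multiple of x₀(x₀ − x₂)x₂. If the sum
vanishes, the same formulas can be solved for a cubic through the nine points with f(0,1,0) = 1.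
-/

open MvPolynomial

variable {R : Type*}

theorem MvPolynomial.IsHomogeneous.eval_eq_sum_antidiagonalTuple [CommSemiring R]
    {k n : ℕ} {f : MvPolynomial (Fin k) R} (hf : f.IsHomogeneous n) (v : Fin k → R) :
    eval v f = ∑ d ∈ Finset.Nat.antidiagonalTuple k n,
      coeff (Finsupp.equivFunOnFinite.symm d) f * ∏ i, v i ^ d i := by
  rw [eval_eq']
  trans ∑ d ∈ (Finset.Nat.antidiagonalTuple k n).map Finsupp.equivFunOnFinite.symm.toEmbedding,
    coeff d f * ∏ i, v i ^ d i
  · refine Finset.sum_subset (fun d hd => ?_) (fun d _ hd => by simp [notMem_support_iff.mp hd])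
    simpa [Finsupp.weight_eq_sum, Finset.Nat.mem_antidiagonalTuple] using hf (mem_support_iff.mp hd)
  · simp

theorem Finset.Nat.antidiagonalTuple_three_three :
    antidiagonalTuple 3 3 = {![3, 0, 0], ![2, 1, 0], ![2, 0, 1], ![1, 2, 0], ![1, 1, 1],
      ![1, 0, 2], ![0, 3, 0], ![0, 2, 1], ![0, 1, 2], ![0, 0, 3]} := by
  decide

noncomputable abbrev coeff₃ [CommSemiring R] (i j k : ℕ) (f : MvPolynomial (Fin 3) R) : R :=
  coeff (Finsupp.equivFunOnFinite.symm ![i, j, k]) f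

theorem MvPolynomial.IsHomogeneous.eval_eq_cubic [CommSemiring R]
    {f : MvPolynomial (Fin 3) R} (hf : f.IsHomogeneous 3) (x y z : R) :
    eval ![x, y, z] f =
      coeff₃ 0 3 0 f * y ^ 3 + (coeff₃ 1 2 0 f * x + coeff₃ 0 2 1 f * z) * y ^ 2
      + (coeff₃ 2 1 0 f * x ^ 2 + coeff₃ 1 1 1 f * x * z + coeff₃ 0 1 2 f * z ^ 2) * y
      + (coeff₃ 3 0 0 f * x ^ 3 + coeff₃ 2 0 1 f * x ^ 2 * z
        + coeff₃ 1 0 2 f * x * z ^ 2 + coeff₃ 0 0 3 f * z ^ 3) := by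
  rw [hf.eval_eq_sum_antidiagonalTuple, Finset.Nat.antidiagonalTuple_three_three]
  simp [Finset.sum_insert, Fin.prod_univ_three]
  ring

theorem cubic_coeffs_eq_of_three_roots [CommRing R] [NoZeroDivisors R]
    {b c d e r₁ r₂ r₃ : R} (h₁₂ : r₁ ≠ r₂) (h₁₃ : r₁ ≠ r₃) (h₂₃ : r₂ ≠ r₃)
    (e₁ : b * r₁ ^ 3 + c * r₁ ^ 2 + d * r₁ + e = 0)
    (e₂ : b * r₂ ^ 3 + c * r₂ ^ 2 + d * r₂ + e = 0)
    (e₃ : b * r₃ ^ 3 + c * r₃ ^ 2 + d * r₃ + e = 0) :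
    c = -b * (r₁ + r₂ + r₃) ∧ d = b * (r₁ * r₂ + r₁ * r₃ + r₂ * r₃) ∧ e = -b * (r₁ * r₂ * r₃) := by
  have hc : c = -b * (r₁ + r₂ + r₃) := by
    have h : (c + b * (r₁ + r₂ + r₃)) * ((r₁ - r₂) * (r₁ - r₃) * (r₂ - r₃)) = 0 := by
      linear_combination (r₂ - r₃) * e₁ - (r₁ - r₃) * e₂ + (r₁ - r₂) * e₃
    have hΔ : (r₁ - r₂) * (r₁ - r₃) * (r₂ - r₃) ≠ 0 := by
      simp [sub_eq_zero, h₁₂, h₁₃, h₂₃]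
    linear_combination (mul_eq_zero.mp h).resolve_right hΔ
  have hd : d = b * (r₁ * r₂ + r₁ * r₃ + r₂ * r₃) := by
    have h : (d - b * (r₁ * r₂ + r₁ * r₃ + r₂ * r₃)) * (r₁ - r₂) = 0 := by
      linear_combination e₁ - e₂ - (r₁ ^ 2 - r₂ ^ 2) * hc
    linear_combination (mul_eq_zero.mp h).resolve_right (sub_ne_zero.mpr h₁₂)
  exact ⟨hc, hd, by linear_combination e₁ - r₁ ^ 2 * hc - r₁ * hd⟩

theorem exists_eq_C_mul_of_eval_eq_zero [CommRing R] [IsDomain R] [Infinite R]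
    {a1 a2 a3 a4 a5 a6 a7 a8 a9 : R}
    (h12 : a1 ≠ a2) (h13 : a1 ≠ a3) (h23 : a2 ≠ a3)
    (h45 : a4 ≠ a5) (h49 : a4 ≠ a9) (h59 : a5 ≠ a9)
    (h67 : a6 ≠ a7) (h68 : a6 ≠ a8) (h78 : a7 ≠ a8)
    (hsum : a1 + a2 + a3 + a4 + a5 + a6 + a7 + a8 + a9 ≠ 0)
    {f : MvPolynomial (Fin 3) R} (hf : f.IsHomogeneous 3)
    (hev : eval ![1, -a1, 1] f = 0 ∧ eval ![1, -a2, 1] f = 0 ∧ eval ![1, -a3, 1] f = 0 ∧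
      eval ![0, a4, 1] f = 0 ∧ eval ![0, a5, 1] f = 0 ∧ eval ![0, a9, 1] f = 0 ∧
      eval ![1, a6, 0] f = 0 ∧ eval ![1, a7, 0] f = 0 ∧ eval ![1, a8, 0] f = 0) :
    ∃ c : R, f = C c * (X 0 * (X 0 - X 2) * X 2) := by
  obtain ⟨e1, e2, e3, e4, e5, e9, e6, e7, e8⟩ := hev
  have line := hf.eval_eq_cubic
  obtain ⟨h120, h210, h300⟩ := cubic_coeffs_eq_of_three_roots (b := coeff₃ 0 3 0 f)
    (c := coeff₃ 1 2 0 f) (d := coeff₃ 2 1 0 f) (e := coeff₃ 3 0 0 f) h67 h68 h78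
    (by linear_combination (line 1 a6 0).symm.trans e6)
    (by linear_combination (line 1 a7 0).symm.trans e7)
    (by linear_combination (line 1 a8 0).symm.trans e8)
  obtain ⟨h021, h012, h003⟩ := cubic_coeffs_eq_of_three_roots (b := coeff₃ 0 3 0 f)
    (c := coeff₃ 0 2 1 f) (d := coeff₃ 0 1 2 f) (e := coeff₃ 0 0 3 f) h45 h49 h59
    (by linear_combination (line 0 a4 1).symm.trans e4)
    (by linear_combination (line 0 a5 1).symm.trans e5)
    (by linear_combination (line 0 a9 1).symm.trans e9)
  obtain ⟨hdiag₂, hdiag₁, hdiag₀⟩ := cubic_coeffs_eq_of_three_roots (b := coeff₃ 0 3 0 f)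
    (c := coeff₃ 1 2 0 f + coeff₃ 0 2 1 f) (d := coeff₃ 2 1 0 f + coeff₃ 1 1 1 f + coeff₃ 0 1 2 f)
    (e := coeff₃ 3 0 0 f + coeff₃ 2 0 1 f + coeff₃ 1 0 2 f + coeff₃ 0 0 3 f)
    (neg_injective.ne h12) (neg_injective.ne h13) (neg_injective.ne h23)
    (by linear_combination (line 1 (-a1) 1).symm.trans e1)
    (by linear_combination (line 1 (-a2) 1).symm.trans e2)
    (by linear_combination (line 1 (-a3) 1).symm.trans e3)
  have apex : coeff₃ 0 3 0 f = 0 := by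
    have h : coeff₃ 0 3 0 f * (a1 + a2 + a3 + a4 + a5 + a6 + a7 + a8 + a9) = 0 := by
      linear_combination h120 + h021 - hdiag₂
    exact (mul_eq_zero.mp h).resolve_right hsum
  simp only [apex, neg_zero, zero_mul] at h120 h210 h300 h021 h012 h003 hdiag₁ hdiag₀
  have h111 : coeff₃ 1 1 1 f = 0 := by linear_combination hdiag₁ - h210 - h012
  have h102 : coeff₃ 1 0 2 f = -coeff₃ 2 0 1 f := by linear_combination hdiag₀ - h300 - h003
  refine ⟨coeff₃ 2 0 1 f, funext fun v => ?_⟩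
  rw [show v = ![v 0, v 1, v 2] from by ext i; fin_cases i <;> rfl, line,
    apex, h120, h210, h300, h021, h012, h003, h111, h102]
  simp only [map_mul, map_sub, eval_C, eval_X, Matrix.cons_val_zero, Matrix.cons_val]
  ring

/-- Its restrictions to x₂ = 0 and x₀ = 0 are (x₁ − a₆x₀)(x₁ − a₇x₀)(x₁ − a₈x₀) and
(x₁ − a₄x₂)(x₁ − a₅x₂)(x₁ − a₉x₂); the term divisible by x₀x₂ makes its restriction to x₀ = x₂
equal to (x₁ + a₁x₀)(x₁ + a₂x₀)(x₁ + a₃x₀) when a₁ + ⋯ + a₉ = 0. -/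
noncomputable def ninePointCubic [CommRing R] (a1 a2 a3 a4 a5 a6 a7 a8 a9 : R) :
    MvPolynomial (Fin 3) R :=
  (X 1 - C a6 * X 0) * (X 1 - C a7 * X 0) * (X 1 - C a8 * X 0)
    + (X 1 - C a4 * X 2) * (X 1 - C a5 * X 2) * (X 1 - C a9 * X 2) - X 1 ^ 3
    + X 0 * X 2 * (C (a1 * a2 + a1 * a3 + a2 * a3 - a4 * a5 - a4 * a9 - a5 * a9
        - a6 * a7 - a6 * a8 - a7 * a8) * X 1 + C (a1 * a2 * a3 + a4 * a5 * a9 + a6 * a7 * a8) * X 0)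

theorem isHomogeneous_ninePointCubic [CommRing R] (a1 a2 a3 a4 a5 a6 a7 a8 a9 : R) :
    (ninePointCubic a1 a2 a3 a4 a5 a6 a7 a8 a9).IsHomogeneous 3 := by
  have linear (a : R) (i j : Fin 3) : (X i - C a * X j : MvPolynomial (Fin 3) R).IsHomogeneous 1 :=
    (isHomogeneous_X R i).sub (isHomogeneous_C_mul_X a j)
  refine ((((linear _ _ _).mul (linear _ _ _)).mul (linear _ _ _)).add
    (((linear _ _ _).mul (linear _ _ _)).mul (linear _ _ _)) |>.sub (isHomogeneous_X_pow 1 3)).add ?_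
  exact ((isHomogeneous_X R 0).mul (isHomogeneous_X R 2)).mul
    ((isHomogeneous_C_mul_X _ 1).add (isHomogeneous_C_mul_X _ 0))

theorem eval_ninePointCubic_zero_one_zero [CommRing R] (a1 a2 a3 a4 a5 a6 a7 a8 a9 : R) :
    eval ![0, 1, 0] (ninePointCubic a1 a2 a3 a4 a5 a6 a7 a8 a9) = 1 := by
  simp [ninePointCubic]

theorem eval_ninePointCubic_eq_zero [CommRing R] {a1 a2 a3 a4 a5 a6 a7 a8 a9 : R}
    (hsum : a1 + a2 + a3 + a4 + a5 + a6 + a7 + a8 + a9 = 0) :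
    let f := ninePointCubic a1 a2 a3 a4 a5 a6 a7 a8 a9
    eval ![1, -a1, 1] f = 0 ∧ eval ![1, -a2, 1] f = 0 ∧ eval ![1, -a3, 1] f = 0 ∧
      eval ![0, a4, 1] f = 0 ∧ eval ![0, a5, 1] f = 0 ∧ eval ![0, a9, 1] f = 0 ∧
      eval ![1, a6, 0] f = 0 ∧ eval ![1, a7, 0] f = 0 ∧ eval ![1, a8, 0] f = 0 := by
  simp only [ninePointCubic, map_add, map_sub, map_mul, map_pow, eval_C, eval_X,
    Matrix.cons_val_zero, Matrix.cons_val_one, Matrix.cons_val]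
  refine ⟨?_, ?_, ?_, ?_, ?_, ?_, ?_, ?_, ?_⟩
  · linear_combination (-a1 ^ 2) * hsum
  · linear_combination (-a2 ^ 2) * hsum
  · linear_combination (-a3 ^ 2) * hsum
  all_goals ring

theorem stmt_0 (a1 a2 a3 a4 a5 a6 a7 a8 a9 : ℂ)
    (h12 : a1 ≠ a2) (h13 : a1 ≠ a3) (h23 : a2 ≠ a3)
    (h45 : a4 ≠ a5) (h49 : a4 ≠ a9) (h59 : a5 ≠ a9)
    (h67 : a6 ≠ a7) (h68 : a6 ≠ a8) (h78 : a7 ≠ a8) :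
    (∀ f : MvPolynomial (Fin 3) ℂ, f ≠ 0 → f.IsHomogeneous 3 →
        (eval ![1, -a1, 1] f = 0 ∧ eval ![1, -a2, 1] f = 0 ∧ eval ![1, -a3, 1] f = 0 ∧
         eval ![0, a4, 1] f = 0 ∧ eval ![0, a5, 1] f = 0 ∧ eval ![0, a9, 1] f = 0 ∧
         eval ![1, a6, 0] f = 0 ∧ eval ![1, a7, 0] f = 0 ∧ eval ![1, a8, 0] f = 0) →
        ∃ c : ℂ, f = C c * (X 0 * (X 0 - X 2) * X 2)) ↔
      a1 + a2 + a3 + a4 + a5 + a6 + a7 + a8 + a9 ≠ 0 := by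
  refine ⟨fun H hsum => ?_, fun hsum f _ hf hev =>
    exists_eq_C_mul_of_eval_eq_zero h12 h13 h23 h45 h49 h59 h67 h68 h78 hsum hf hev⟩
  have apex := eval_ninePointCubic_zero_one_zero a1 a2 a3 a4 a5 a6 a7 a8 a9
  obtain ⟨c, hc⟩ := H _ (fun h => by simp [h] at apex)
    (isHomogeneous_ninePointCubic a1 a2 a3 a4 a5 a6 a7 a8 a9) (eval_ninePointCubic_eq_zero hsum)
  simp [hc] at apex
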